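/- Let (H, η) be an extended strip decomposition of a graph G and let Q be an induced path in G between two distinct peripheral vertices x and y. For every edge e = ab of H such that V(Q) ∩ η(e) ≠ ∅, the induced subgraph G[V(Q) ∩ η(e)] is a path whose one endpoint lies in η(e, a), whose other endpoint lies in η(e, b), and all of whose internal vertices lie in η(e) \ (η(e, a) ∪ η(e, b)). -/

import Mathlib

/-- Closed neighborhood of a set `S` in a graph `G`. -/
def closedNbhd {V : Type*} (G : SimpleGraph V) (S : Set V) : Set V :=
  S ∪ {v | ∃ s ∈ S, G.Adj s v}

/-- Open neighborhood of a set `S` in a graph `G`. -/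
def openNbhd {V : Type*} (G : SimpleGraph V) (S : Set V) : Set V :=
  {v | v ∉ S ∧ ∃ s ∈ S, G.Adj s v}

/-- Reachability inside the induced subgraph of `G` on the vertex set `T`. -/
def ReachIn {V : Type*} (G : SimpleGraph V) (T : Set V) : V → V → Prop :=
  Relation.ReflTransGen (fun a b => G.Adj a b ∧ a ∈ T ∧ b ∈ T)

/-- Total weight of a vertex set. -/
noncomputable def wsum {V : Type*} [Fintype V] (w : V → ℕ) (S : Set V) : ℕ :=
  ∑ v ∈ S.toFinite.toFinset, w v

/-- `l` is the vertex sequence of an induced path of `G`: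
nonempty, no repetitions, and two vertices of `l` are adjacent in `G`
iff they are consecutive in `l`. -/
def IsInducedPathList {V : Type*} (G : SimpleGraph V) (l : List V) : Prop :=
  l ≠ [] ∧ l.Nodup ∧
  ∀ (i j : ℕ) (hi : i < l.length) (hj : j < l.length),
    G.Adj (l.get ⟨i, hi⟩) (l.get ⟨j, hj⟩) ↔ (i + 1 = j ∨ j + 1 = i)

/-- Every connected component of the induced subgraph of `G` on `T`
has `w`-weight at most `b`. -/
def CompsSmall {V : Type*} [Fintype V] (G : SimpleGraph V) (w : V → ℕ)
    (T : Set V) (b : ℕ) : Prop :=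
  ∀ v ∈ T, wsum w {u | ReachIn G T v u} ≤ b

/-- `x`, `y`, `z` form a triangle in `H`. -/
def Tri {H' : Type*} (H : SimpleGraph H') (x y z : H') : Prop :=
  H.Adj x y ∧ H.Adj y z ∧ H.Adj x z

/-- An extended strip decomposition `(H, η)` of a graph `G`.
`ηv x` is `η(x)`, `ηe x y` is `η(xy)`, `ηi x y` is the interface `η(xy, x)`,
and `ηt x y z` is `η(xyz)`. -/
structure ESD {V : Type*} {H' : Type*} (G : SimpleGraph V) (H : SimpleGraph H') where
  ηv : H' → Set V
  ηe : H' → H' → Set V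
  ηi : H' → H' → Set V
  ηt : H' → H' → H' → Set V
  ηe_symm : ∀ x y, ηe x y = ηe y x
  ηt_symm12 : ∀ x y z, ηt x y z = ηt y x z
  ηt_symm23 : ∀ x y z, ηt x y z = ηt x z y
  ηe_empty : ∀ x y, ¬ H.Adj x y → ηe x y = ∅
  ηt_empty : ∀ x y z, ¬ Tri H x y z → ηt x y z = ∅
  ηi_sub : ∀ x y, ηi x y ⊆ ηe x y
  cover : ∀ v : V, (∃ x, v ∈ ηv x) ∨ (∃ x y, v ∈ ηe x y) ∨ (∃ x y z, v ∈ ηt x y z)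
  disj_vv : ∀ x y, x ≠ y → ηv x ∩ ηv y = ∅
  disj_ve : ∀ x y z, ηv x ∩ ηe y z = ∅
  disj_vt : ∀ x a b c, ηv x ∩ ηt a b c = ∅
  disj_ee : ∀ x y a b, ¬ (x = a ∧ y = b) → ¬ (x = b ∧ y = a) → ηe x y ∩ ηe a b = ∅
  disj_et : ∀ x y a b c, ηe x y ∩ ηt a b c = ∅
  disj_tt : ∀ a b c d e f, ({a, b, c} : Set H') ≠ ({d, e, f} : Set H') →
    ηt a b c ∩ ηt d e f = ∅
  complete : ∀ x y z, H.Adj x y → H.Adj x z → y ≠ z →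
    ∀ u ∈ ηi x y, ∀ v ∈ ηi x z, G.Adj u v
  edge_cond : ∀ u v : V, G.Adj u v →
    (∃ x, u ∈ ηv x ∧ v ∈ ηv x) ∨
    (∃ x y, u ∈ ηe x y ∧ v ∈ ηe x y) ∨
    (∃ x y z, u ∈ ηt x y z ∧ v ∈ ηt x y z) ∨
    (∃ x y z, H.Adj x y ∧ H.Adj x z ∧ y ≠ z ∧
      ((u ∈ ηi x y ∧ v ∈ ηi x z) ∨ (v ∈ ηi x y ∧ u ∈ ηi x z))) ∨
    (∃ x y, H.Adj x y ∧ ((u ∈ ηi x y ∧ v ∈ ηv x) ∨ (v ∈ ηi x y ∧ u ∈ ηv x))) ∨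
    (∃ x y z, Tri H x y z ∧
      ((u ∈ ηt x y z ∧ v ∈ ηi x y ∩ ηi y x) ∨ (v ∈ ηt x y z ∧ u ∈ ηi x y ∩ ηi y x)))

namespace ESD

variable {V : Type*} {H' : Type*} {G : SimpleGraph V} {H : SimpleGraph H'}

/-- A rigid extended strip decomposition: every edge of `H` has nonempty interfaces
and every isolated vertex `x` of `H` has `η(x) ≠ ∅`. -/
def IsRigid (D : ESD G H) : Prop :=
  (∀ x y, H.Adj x y → (D.ηi x y).Nonempty) ∧
  (∀ x, (∀ y, ¬ H.Adj x y) → (D.ηv x).Nonempty)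

/-- A vertex `z` of `G` is peripheral in `(H, η)`. -/
def Peripheral (D : ESD G H) (z : V) : Prop :=
  ∃ x y, H.Adj x y ∧ (∀ u, H.Adj x u → u = y) ∧ D.ηi x y = {z} ∧ D.ηv x = ∅

/-- The full edge particle `A_{pq}^{pq}`. -/
def fullEdge (D : ESD G H) (p q : H') : Set V :=
  D.ηv p ∪ D.ηv q ∪ D.ηe p q ∪ {v | ∃ r, v ∈ D.ηt p q r}

/-- Every particle of `D` has `w`-weight at most `b`. -/
def ParticlesSmall [Fintype V] (D : ESD G H) (w : V → ℕ) (b : ℕ) : Prop :=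
  (∀ x, wsum w (D.ηv x) ≤ b) ∧
  (∀ x y, H.Adj x y → wsum w (D.ηe x y \ (D.ηi x y ∪ D.ηi y x)) ≤ b) ∧
  (∀ x y, H.Adj x y → wsum w (D.ηv x ∪ (D.ηe x y \ D.ηi y x)) ≤ b) ∧
  (∀ x y, H.Adj x y → wsum w (D.fullEdge x y) ≤ b) ∧
  (∀ x y z, Tri H x y z → wsum w (D.ηt x y z) ≤ b)

end ESD

/-- The subdivided claw `S_{t,t,t}`: a center vertex and three arms of length `t`. -/
def StttRel (t : ℕ) : (Unit ⊕ Fin 3 × Fin t) → (Unit ⊕ Fin 3 × Fin t) → Prop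
  | Sum.inl _, Sum.inr p => p.2.val = 0
  | Sum.inr p, Sum.inr q => p.1 = q.1 ∧ p.2.val + 1 = q.2.val
  | _, _ => False

def Sttt (t : ℕ) : SimpleGraph (Unit ⊕ Fin 3 × Fin t) :=
  SimpleGraph.fromRel (StttRel t)

/-!
The path meets every interface `η(cd, c)` at most once. Indeed, where the path first enters
`η(cd)` it comes from another interface at the same end of `cd`: a detour through `η(c)` or
through a triangle set would have passed an interface at `c` or `d` earlier, and interfaces at a
common node of `H` are complete to each other, so the path meets them only consecutively. This
pins the interface of entry down to a single path vertex, and likewise for the last exit; a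
second vertex in `η(cd, c)` would force both to be `η(cd, d)`, so entry and exit would coincide.

Hence every maximal run of the path inside `η(ab)` starts and ends in opposite interfaces (a
one-vertex run in just one interface is excluded by the same completeness, or by `a` being a
leaf of `H` when the run sits at an end of the path), and since `η(ab, a)` holds only one path
vertex there is only one run.
-/

lemma exists_le_lt_and_not_succ {p : ℕ → Prop} {i j : ℕ} (hij : i ≤ j) (hi : p i)
    (hj : ¬ p j) : ∃ k, i ≤ k ∧ k < j ∧ p k ∧ ¬ p (k + 1) := by
  induction j, hij using Nat.le_induction with
  | base => exact absurd hi hj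
  | succ j hij ih =>
    by_cases hpj : p j
    · exact ⟨j, hij, j.lt_succ_self, hpj, hj⟩
    · obtain ⟨k, hik, hkj, hk⟩ := ih hpj
      exact ⟨k, hik, hkj.trans j.lt_succ_self, hk⟩

lemma exists_first_of {p : ℕ → Prop} {k : ℕ} (hk : p k) :
    ∃ s ≤ k, p s ∧ ∀ j < s, ¬ p j := by
  classical
  exact ⟨Nat.find ⟨k, hk⟩, Nat.find_min' _ hk, Nat.find_spec ⟨k, hk⟩,
    fun _ => Nat.find_min _⟩

lemma exists_last_of {p : ℕ → Prop} {k m : ℕ} (hk : p k) (hkm : k < m) :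
    ∃ t, k ≤ t ∧ t < m ∧ p t ∧ ∀ j, t < j → j < m → ¬ p j := by
  classical
  refine ⟨Nat.findGreatest p (m - 1), Nat.le_findGreatest (by omega) hk, ?_,
    Nat.findGreatest_spec (by omega) hk, fun j h1 h2 => Nat.findGreatest_is_greatest h1 (by omega)⟩
  have := Nat.findGreatest_le (P := p) (m - 1)
  omega

namespace ESD

variable {V H' : Type*} {G : SimpleGraph V} {H : SimpleGraph H'} (D : ESD G H)

lemma adj_of_mem_ηe {v : V} {x y : H'} (h : v ∈ D.ηe x y) : H.Adj x y := by
  by_contra hxy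
  rwa [D.ηe_empty x y hxy] at h

lemma notMem_ηe_of_mem_ηv {v : V} {x c d : H'} (h : v ∈ D.ηv x) : v ∉ D.ηe c d :=
  fun h' => Set.eq_empty_iff_forall_notMem.mp (D.disj_ve x c d) v ⟨h, h'⟩

lemma notMem_ηt_of_mem_ηv {v : V} {x c d r : H'} (h : v ∈ D.ηv x) : v ∉ D.ηt c d r :=
  fun h' => Set.eq_empty_iff_forall_notMem.mp (D.disj_vt x c d r) v ⟨h, h'⟩

lemma notMem_ηt_of_mem_ηe {v : V} {x y c d r : H'} (h : v ∈ D.ηe x y) : v ∉ D.ηt c d r :=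
  fun h' => Set.eq_empty_iff_forall_notMem.mp (D.disj_et x y c d r) v ⟨h, h'⟩

lemma eq_of_mem_ηv_of_mem_ηv {v : V} {x y : H'} (hx : v ∈ D.ηv x) (hy : v ∈ D.ηv y) :
    x = y := by
  by_contra hxy
  exact Set.eq_empty_iff_forall_notMem.mp (D.disj_vv x y hxy) v ⟨hx, hy⟩

lemma eq_or_swap_of_mem_ηe {v : V} {x y c d : H'} (h : v ∈ D.ηe x y) (h' : v ∈ D.ηe c d) :
    x = c ∧ y = d ∨ x = d ∧ y = c := by
  by_contra hne
  push Not at hne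
  exact Set.eq_empty_iff_forall_notMem.mp
    (D.disj_ee x y c d (fun h => hne.1 h.1 h.2) (fun h => hne.2 h.1 h.2)) v ⟨h, h'⟩

lemma ηe_eq_of_eq_or_swap {x y c d : H'} (h : x = c ∧ y = d ∨ x = d ∧ y = c) :
    D.ηe x y = D.ηe c d := by
  rcases h with ⟨rfl, rfl⟩ | ⟨rfl, rfl⟩
  exacts [rfl, D.ηe_symm _ _]

lemma triple_eq_of_mem_ηt {v : V} {x y z c d r : H'} (h : v ∈ D.ηt x y z)
    (h' : v ∈ D.ηt c d r) : ({x, y, z} : Set H') = {c, d, r} := by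
  by_contra hne
  exact Set.eq_empty_iff_forall_notMem.mp (D.disj_tt x y z c d r hne) v ⟨h, h'⟩

lemma exists_ηi_of_adj_of_mem_ηe {u v : V} {c d : H'} (hu : u ∈ D.ηe c d)
    (hv : v ∉ D.ηe c d) (huv : G.Adj u v) :
    ∃ x y, (x = c ∧ y = d ∨ x = d ∧ y = c) ∧ u ∈ D.ηi x y ∧
      ((∃ z, z ≠ y ∧ v ∈ D.ηi x z) ∨ v ∈ D.ηv x ∨ (u ∈ D.ηi y x ∧ ∃ z, v ∈ D.ηt x y z)) := by
  rcases D.edge_cond u v huv with ⟨x, hux, -⟩ | ⟨x, y, hux, hvx⟩ | ⟨x, y, z, hux, -⟩ |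
    ⟨x, y, z, -, -, hyz, ⟨hux, hvx⟩ | ⟨hvx, hux⟩⟩ | ⟨x, y, -, ⟨hux, hvx⟩ | ⟨-, hux⟩⟩ |
    ⟨x, y, z, -, ⟨hux, -⟩ | ⟨hvx, hux, hux'⟩⟩
  · exact absurd hu (D.notMem_ηe_of_mem_ηv hux)
  · exact absurd (D.ηe_eq_of_eq_or_swap (D.eq_or_swap_of_mem_ηe hux hu) ▸ hvx) hv
  · exact absurd hux (D.notMem_ηt_of_mem_ηe hu)
  · exact ⟨x, y, D.eq_or_swap_of_mem_ηe (D.ηi_sub x y hux) hu, hux,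
      Or.inl ⟨z, Ne.symm hyz, hvx⟩⟩
  · exact ⟨x, z, D.eq_or_swap_of_mem_ηe (D.ηi_sub x z hux) hu, hux, Or.inl ⟨y, hyz, hvx⟩⟩
  · exact ⟨x, y, D.eq_or_swap_of_mem_ηe (D.ηi_sub x y hux) hu, hux, Or.inr (Or.inl hvx)⟩
  · exact absurd hu (D.notMem_ηe_of_mem_ηv hux)
  · exact absurd hux (D.notMem_ηt_of_mem_ηe hu)
  · exact ⟨x, y, D.eq_or_swap_of_mem_ηe (D.ηi_sub x y hux) hu, hux,
      Or.inr (Or.inr ⟨hux', z, hvx⟩)⟩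

lemma exists_ηi_of_adj_of_mem_ηv {u v : V} {c : H'} (hu : u ∈ D.ηv c) (hv : v ∉ D.ηv c)
    (huv : G.Adj u v) : ∃ g, v ∈ D.ηi c g := by
  rcases D.edge_cond u v huv with ⟨x, hux, hvx⟩ | ⟨x, y, hux, -⟩ | ⟨x, y, z, hux, -⟩ |
    ⟨x, y, z, -, -, -, ⟨hux, -⟩ | ⟨-, hux⟩⟩ | ⟨x, y, -, ⟨hux, -⟩ | ⟨hvx, hux⟩⟩ |
    ⟨x, y, z, -, ⟨hux, -⟩ | ⟨-, hux, -⟩⟩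
  · exact absurd (D.eq_of_mem_ηv_of_mem_ηv hux hu ▸ hvx) hv
  · exact absurd hux (D.notMem_ηe_of_mem_ηv hu)
  · exact absurd hux (D.notMem_ηt_of_mem_ηv hu)
  · exact absurd (D.ηi_sub _ _ hux) (D.notMem_ηe_of_mem_ηv hu)
  · exact absurd (D.ηi_sub _ _ hux) (D.notMem_ηe_of_mem_ηv hu)
  · exact absurd (D.ηi_sub _ _ hux) (D.notMem_ηe_of_mem_ηv hu)
  · exact ⟨y, D.eq_of_mem_ηv_of_mem_ηv hux hu ▸ hvx⟩
  · exact absurd hux (D.notMem_ηt_of_mem_ηv hu)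
  · exact absurd (D.ηi_sub _ _ hux) (D.notMem_ηe_of_mem_ηv hu)

/-- The axioms separate `η(xyz)` only from triangle sets on a different vertex set, hence `hv`
excludes every ordering of `{x, y, z}`. -/
lemma exists_ηi_of_adj_of_mem_ηt {u v : V} {x y z : H'} (hu : u ∈ D.ηt x y z)
    (hv : ∀ x' y' z', ({x', y', z'} : Set H') = {x, y, z} → v ∉ D.ηt x' y' z')
    (huv : G.Adj u v) :
    ∃ x' y', x' ∈ ({x, y, z} : Set H') ∧ y' ∈ ({x, y, z} : Set H') ∧ x' ≠ y' ∧
      v ∈ D.ηi x' y' ∧ v ∈ D.ηi y' x' := by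
  rcases D.edge_cond u v huv with ⟨x, hux, -⟩ | ⟨x, y, hux, -⟩ | ⟨x', y', z', hux, hvx⟩ |
    ⟨x, y, z, -, -, -, ⟨hux, -⟩ | ⟨-, hux⟩⟩ | ⟨x, y, -, ⟨hux, -⟩ | ⟨-, hux⟩⟩ |
    ⟨x', y', z', htri, ⟨hux, hvx, hvx'⟩ | ⟨-, hux, -⟩⟩
  · exact absurd hu (D.notMem_ηt_of_mem_ηv hux)
  · exact absurd hu (D.notMem_ηt_of_mem_ηe hux)
  · exact absurd hvx (hv x' y' z' (D.triple_eq_of_mem_ηt hux hu))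
  · exact absurd hu (D.notMem_ηt_of_mem_ηe (D.ηi_sub _ _ hux))
  · exact absurd hu (D.notMem_ηt_of_mem_ηe (D.ηi_sub _ _ hux))
  · exact absurd hu (D.notMem_ηt_of_mem_ηe (D.ηi_sub _ _ hux))
  · exact absurd hu (D.notMem_ηt_of_mem_ηv hux)
  · have hK := D.triple_eq_of_mem_ηt hux hu
    exact ⟨x', y', hK ▸ by simp, hK ▸ by simp, htri.1.ne, hvx, hvx'⟩
  · exact absurd hu (D.notMem_ηt_of_mem_ηe (D.ηi_sub _ _ hux))

end ESD

section

variable {V H' : Type*} {G : SimpleGraph V} {H : SimpleGraph H'}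

/-- The induced path `f 0, …, f (n - 1)`; the values of `f` from `n` on are irrelevant. -/
structure PeripheralPath (D : ESD G H) where
  n : ℕ
  f : ℕ → V
  injOn : ∀ i j, i < n → j < n → f i = f j → i = j
  adj_iff : ∀ i j, i < n → j < n → (G.Adj (f i) (f j) ↔ i + 1 = j ∨ j + 1 = i)
  peripheral_start : D.Peripheral (f 0)
  peripheral_end : D.Peripheral (f (n - 1))
  start_ne_end : f 0 ≠ f (n - 1)

namespace PeripheralPath

variable {D : ESD G H} (P : PeripheralPath D) {a b c d : H'} {i j k s t : ℕ}

def reverse : PeripheralPath D where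
  n := P.n
  f i := P.f (P.n - 1 - i)
  injOn i j hi hj h := by
    have := P.injOn _ _ (by omega) (by omega) h
    omega
  adj_iff i j hi hj := (P.adj_iff _ _ (by omega) (by omega)).trans (by omega)
  peripheral_start := by simpa using P.peripheral_end
  peripheral_end := by simpa using P.peripheral_start
  start_ne_end := by simpa using P.start_ne_end.symm

@[simp] lemma reverse_n : P.reverse.n = P.n := rfl

lemma reverse_f (i : ℕ) : P.reverse.f i = P.f (P.n - 1 - i) := rfl

lemma reverse_f_sub (hi : i < P.n) : P.reverse.f (P.n - 1 - i) = P.f i := by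
  show P.f _ = _
  rw [show P.n - 1 - (P.n - 1 - i) = i by omega]

lemma two_le : 2 ≤ P.n := by
  by_contra h
  exact P.start_ne_end (congrArg P.f (by omega))

lemma adj_pred (hi : i < P.n) (hi0 : 0 < i) : G.Adj (P.f i) (P.f (i - 1)) :=
  (P.adj_iff _ _ hi (by omega)).mpr (by omega)

lemma adj_succ (hi : i + 1 < P.n) : G.Adj (P.f i) (P.f (i + 1)) :=
  (P.adj_iff _ _ (by omega) hi).mpr (by omega)

lemma exists_start_ηi (h : P.f 0 ∈ D.ηe c d) :
    ∃ x y, (x = c ∧ y = d ∨ x = d ∧ y = c) ∧ D.ηi x y = {P.f 0} ∧ ∀ u, H.Adj x u → u = y := by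
  obtain ⟨x, y, -, hpend, hxy, -⟩ := P.peripheral_start
  have h0 : P.f 0 ∈ D.ηe x y := D.ηi_sub x y (hxy ▸ rfl)
  exact ⟨x, y, D.eq_or_swap_of_mem_ηe h0 h, hxy, hpend⟩

lemma start_mem_ηe : ∃ x y, P.f 0 ∈ D.ηe x y := by
  obtain ⟨x, y, -, -, hxy, -⟩ := P.peripheral_start
  exact ⟨x, y, D.ηi_sub x y (hxy ▸ rfl)⟩

lemma succ_eq_or_of_mem_ηi {d' : H'} (hdd : d ≠ d') (hi : i < P.n) (hj : j < P.n)
    (hfi : P.f i ∈ D.ηi c d) (hfj : P.f j ∈ D.ηi c d') : i + 1 = j ∨ j + 1 = i :=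
  (P.adj_iff i j hi hj).mp <| D.complete c d d' (D.adj_of_mem_ηe (D.ηi_sub _ _ hfi))
    (D.adj_of_mem_ηe (D.ηi_sub _ _ hfj)) hdd _ hfi _ hfj

lemma exists_lt_mem_ηi_of_mem_ηv (hi : i < P.n) (hfi : P.f i ∈ D.ηv c) :
    ∃ j < i, ∃ g, P.f j ∈ D.ηi c g := by
  obtain ⟨x, y, h0⟩ := P.start_mem_ηe
  obtain ⟨j, -, hji, hj, hj1⟩ := exists_le_lt_and_not_succ (p := fun k => P.f k ∉ D.ηv c)
    (Nat.zero_le i) (fun h => D.notMem_ηe_of_mem_ηv h h0) (not_not.mpr hfi)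
  exact ⟨j, hji, D.exists_ηi_of_adj_of_mem_ηv (not_not.mp hj1) hj (P.adj_succ (by omega)).symm⟩

lemma exists_lt_mem_ηi_of_mem_ηt {x y z : H'} (hi : i < P.n) (hfi : P.f i ∈ D.ηt x y z) :
    ∃ j < i, ∃ x' y', x' ∈ ({x, y, z} : Set H') ∧ y' ∈ ({x, y, z} : Set H') ∧ x' ≠ y' ∧
      P.f j ∈ D.ηi x' y' ∧ P.f j ∈ D.ηi y' x' := by
  obtain ⟨x₀, y₀, h0⟩ := P.start_mem_ηe
  let inTriangle k := ∃ x' y' z', ({x', y', z'} : Set H') = {x, y, z} ∧ P.f k ∈ D.ηt x' y' z'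
  obtain ⟨j, -, hji, hj, hj1⟩ := exists_le_lt_and_not_succ (p := fun k => ¬ inTriangle k)
    (Nat.zero_le i) (fun ⟨_, _, _, _, h⟩ => D.notMem_ηt_of_mem_ηe h0 h)
    (not_not.mpr ⟨x, y, z, rfl, hfi⟩)
  obtain ⟨x₁, y₁, z₁, hK, hmem⟩ := not_not.mp hj1
  obtain ⟨x', y', hx', hy', hne, h⟩ := D.exists_ηi_of_adj_of_mem_ηt hmem
    (fun x₂ y₂ z₂ h₂ hv => hj ⟨x₂, y₂, z₂, h₂.trans hK, hv⟩) (P.adj_succ (by omega)).symm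
  exact ⟨j, hji, x', y', hK ▸ hx', hK ▸ hy', hne, h⟩

lemma notMem_ηi_of_lt_first (hs : s < P.n) (hmin : ∀ j < s, P.f j ∉ D.ηe c d)
    (hsI : P.f s ∈ D.ηi c d) (hj : j + 1 < s) (g : H') : P.f j ∉ D.ηi c g := by
  intro hjg
  by_cases hgd : g = d
  · exact hmin j (by omega) (D.ηi_sub _ _ (hgd ▸ hjg))
  · have := P.succ_eq_or_of_mem_ηi hgd (by omega) hs hjg hsI
    omega

lemma exists_ηi_eq_of_first (hs : s < P.n) (hsE : P.f s ∈ D.ηe c d)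
    (hmin : ∀ j < s, P.f j ∉ D.ηe c d) :
    ∃ x y, (x = c ∧ y = d ∨ x = d ∧ y = c) ∧ P.f s ∈ D.ηi x y ∧
      ∀ k < P.n, P.f k ∈ D.ηi x y → k = s := by
  rcases Nat.eq_zero_or_pos s with rfl | hs0
  · obtain ⟨x, y, hxy, hI, -⟩ := P.exists_start_ηi hsE
    refine ⟨x, y, hxy, hI ▸ rfl, fun k hk hkI => P.injOn k 0 hk hs ?_⟩
    rwa [hI] at hkI
  obtain ⟨x, y, hxy, hsI, hprev⟩ :=
    D.exists_ηi_of_adj_of_mem_ηe hsE (hmin (s - 1) (by omega)) (P.adj_pred hs hs0)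
  rw [← D.ηe_eq_of_eq_or_swap hxy] at hmin
  have hmin' : ∀ j < s, P.f j ∉ D.ηe y x := fun j hj => D.ηe_symm x y ▸ hmin j hj
  refine ⟨x, y, hxy, hsI, ?_⟩
  rcases hprev with ⟨z, hzy, hz⟩ | hv | ⟨hsI', z, ht⟩
  · intro k hk hkI
    rcases P.succ_eq_or_of_mem_ηi hzy.symm hk (by omega) hkI hz with h | h
    · exact absurd (D.ηi_sub _ _ hkI) (hmin k (by omega))
    · omega
  · obtain ⟨j, hj, g, hjg⟩ := P.exists_lt_mem_ηi_of_mem_ηv (by omega) hv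
    exact absurd hjg (P.notMem_ηi_of_lt_first hs hmin hsI (by omega) g)
  · obtain ⟨j, hj, x', y', hx', hy', hne, h1, h2⟩ := P.exists_lt_mem_ηi_of_mem_ηt (by omega) ht
    -- of the two distinct nodes `x'`, `y'` of the triangle, one is an end of `cd`
    have not_at : ∀ w w', w = x ∨ w = y → P.f j ∉ D.ηi w w' := by
      rintro w w' (rfl | rfl)
      exacts [P.notMem_ηi_of_lt_first hs hmin hsI (by omega) w',
        P.notMem_ηi_of_lt_first hs hmin' hsI' (by omega) w']
    simp only [Set.mem_insert_iff, Set.mem_singleton_iff] at hx' hy'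
    rcases hx' with hx' | hx' | rfl
    · exact absurd h1 (not_at _ _ (Or.inl hx'))
    · exact absurd h1 (not_at _ _ (Or.inr hx'))
    · rcases hy' with hy' | hy' | rfl
      · exact absurd h2 (not_at _ _ (Or.inl hy'))
      · exact absurd h2 (not_at _ _ (Or.inr hy'))
      · exact absurd rfl hne

lemma exists_ηi_eq_of_last (ht : t < P.n) (htE : P.f t ∈ D.ηe c d)
    (hmax : ∀ j, t < j → j < P.n → P.f j ∉ D.ηe c d) :
    ∃ x y, (x = c ∧ y = d ∨ x = d ∧ y = c) ∧ P.f t ∈ D.ηi x y ∧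
      ∀ k < P.n, P.f k ∈ D.ηi x y → k = t := by
  obtain ⟨x, y, hxy, htI, huniq⟩ := P.reverse.exists_ηi_eq_of_first (s := P.n - 1 - t)
    (by simp; omega) (by rwa [P.reverse_f_sub ht])
    (fun j hj => by rw [P.reverse_f]; exact hmax _ (by omega) (by omega))
  refine ⟨x, y, hxy, by rwa [P.reverse_f_sub ht] at htI, fun k hk hkI => ?_⟩
  have := huniq (P.n - 1 - k) (by simp; omega) (by rwa [P.reverse_f_sub hk])
  omega

/-- If the path met `η(cd, c)` twice, the interfaces through which it first enters and
last leaves `η(cd)` would both have to be `η(cd, d)`, which it meets only once. -/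
lemma eq_of_mem_ηi (hi : i < P.n) (hj : j < P.n) (hfi : P.f i ∈ D.ηi c d)
    (hfj : P.f j ∈ D.ηi c d) : i = j := by
  wlog hij : i < j generalizing i j
  · rcases Nat.lt_or_ge j i with h | h
    exacts [(this hj hi hfj hfi h).symm, by omega]
  obtain ⟨s, hsi, hsE, hmin⟩ :=
    exists_first_of (p := fun k => P.f k ∈ D.ηe c d) (D.ηi_sub _ _ hfi)
  obtain ⟨t, hjt, htn, htE, hmax⟩ :=
    exists_last_of (p := fun k => P.f k ∈ D.ηe c d) (D.ηi_sub _ _ hfj) hj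
  obtain ⟨x, y, hxy, hsI, hs⟩ := P.exists_ηi_eq_of_first (by omega) hsE hmin
  obtain ⟨x', y', hxy', htI, ht⟩ := P.exists_ηi_eq_of_last htn htE hmax
  rcases hxy with ⟨rfl, rfl⟩ | ⟨rfl, rfl⟩
  · have := hs i hi hfi
    have := hs j hj hfj
    omega
  rcases hxy' with ⟨rfl, rfl⟩ | ⟨rfl, rfl⟩
  · have := ht i hi hfi
    have := ht j hj hfj
    omega
  · have := hs t htn htI
    omega

lemma exists_ηi_of_pred_notMem (hi : i < P.n) (hi0 : 0 < i) (hA : P.f i ∈ D.ηi a b)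
    (hB : P.f i ∉ D.ηi b a) (hprev : P.f (i - 1) ∉ D.ηe a b) :
    ∃ g, g ≠ b ∧ P.f (i - 1) ∈ D.ηi a g := by
  obtain ⟨x, y, hxy, hI, hcases⟩ :=
    D.exists_ηi_of_adj_of_mem_ηe (D.ηi_sub _ _ hA) hprev (P.adj_pred hi hi0)
  obtain ⟨rfl, rfl⟩ : x = a ∧ y = b := hxy.resolve_right fun ⟨hx, hy⟩ => hB (hx ▸ hy ▸ hI)
  rcases hcases with ⟨z, hzy, hz⟩ | hv | ⟨hI', -⟩
  · exact ⟨z, hzy, hz⟩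
  · obtain ⟨j, hj, g, hjg⟩ := P.exists_lt_mem_ηi_of_mem_ηv (by omega) hv
    by_cases hgy : g = y
    · have := P.eq_of_mem_ηi (by omega) hi (hgy ▸ hjg) hA
      omega
    · have := P.succ_eq_or_of_mem_ηi hgy (by omega) hi hjg hA
      omega
  · exact absurd hI' hB

lemma exists_ηi_of_succ_notMem (hi : i + 1 < P.n) (hA : P.f i ∈ D.ηi a b)
    (hB : P.f i ∉ D.ηi b a) (hnext : P.f (i + 1) ∉ D.ηe a b) :
    ∃ g, g ≠ b ∧ P.f (i + 1) ∈ D.ηi a g := by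
  have hsucc : P.reverse.f (P.n - 1 - i - 1) = P.f (i + 1) := by
    rw [show P.n - 1 - i - 1 = P.n - 1 - (i + 1) by omega, P.reverse_f_sub hi]
  rw [← P.reverse_f_sub (by omega)] at hA hB
  rw [← hsucc] at hnext ⊢
  exact P.reverse.exists_ηi_of_pred_notMem (by simp; omega) (by omega) hA hB hnext

lemma pendant_of_start_mem_ηi (hA : P.f 0 ∈ D.ηi a b) (hB : P.f 0 ∉ D.ηi b a) :
    ∀ u, H.Adj a u → u = b := by
  obtain ⟨x, y, hxy, hI, hpend⟩ := P.exists_start_ηi (D.ηi_sub _ _ hA)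
  rcases hxy with ⟨rfl, rfl⟩ | ⟨rfl, rfl⟩
  · exact hpend
  · exact absurd (hI ▸ rfl) hB

/-- The path-neighbours of such a vertex lie in interfaces `η(ag, a)` with `g ≠ b`: two
different ones are complete to each other, a single one is met only once, and at an end of
the path `a` is a leaf of `H`. -/
lemma not_isolated_of_mem_ηi (hi : i < P.n) (hA : P.f i ∈ D.ηi a b) (hB : P.f i ∉ D.ηi b a)
    (hprev : 0 < i → P.f (i - 1) ∉ D.ηe a b) (hnext : i + 1 < P.n → P.f (i + 1) ∉ D.ηe a b) :
    False := by
  have hn := P.two_le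
  rcases Nat.eq_zero_or_pos i with rfl | hi0
  · obtain ⟨g, hgb, hg⟩ := P.exists_ηi_of_succ_notMem (by omega) hA hB (hnext (by omega))
    exact hgb (P.pendant_of_start_mem_ηi hA hB g (D.adj_of_mem_ηe (D.ηi_sub _ _ hg)))
  obtain ⟨g, hgb, hg⟩ := P.exists_ηi_of_pred_notMem hi hi0 hA hB (hprev hi0)
  rcases Nat.lt_or_ge (i + 1) P.n with hi1 | hi1
  · obtain ⟨g', -, hg'⟩ := P.exists_ηi_of_succ_notMem hi1 hA hB (hnext hi1)
    by_cases hgg : g = g'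
    · have := P.eq_of_mem_ηi (by omega) hi1 hg (hgg ▸ hg')
      omega
    · have := P.succ_eq_or_of_mem_ηi hgg (by omega) hi1 hg hg'
      omega
  · have hend : P.reverse.f 0 = P.f i := by
      rw [P.reverse_f, show P.n - 1 - 0 = i by omega]
    rw [← hend] at hA hB
    exact hgb (P.reverse.pendant_of_start_mem_ηi hA hB g (D.adj_of_mem_ηe (D.ηi_sub _ _ hg)))

lemma mem_ηi_of_pred_notMem (hi : i < P.n) (hE : P.f i ∈ D.ηe a b)
    (hprev : 0 < i → P.f (i - 1) ∉ D.ηe a b) : P.f i ∈ D.ηi a b ∨ P.f i ∈ D.ηi b a := by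
  rcases Nat.eq_zero_or_pos i with rfl | hi0
  · obtain ⟨x, y, hxy, hI, -⟩ := P.exists_start_ηi hE
    rcases hxy with ⟨rfl, rfl⟩ | ⟨rfl, rfl⟩
    exacts [Or.inl (hI ▸ rfl), Or.inr (hI ▸ rfl)]
  · obtain ⟨x, y, hxy, hI, -⟩ := D.exists_ηi_of_adj_of_mem_ηe hE (hprev hi0) (P.adj_pred hi hi0)
    rcases hxy with ⟨rfl, rfl⟩ | ⟨rfl, rfl⟩
    exacts [Or.inl hI, Or.inr hI]

lemma mem_ηi_of_succ_notMem (hi : i < P.n) (hE : P.f i ∈ D.ηe a b)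
    (hnext : i + 1 < P.n → P.f (i + 1) ∉ D.ηe a b) : P.f i ∈ D.ηi a b ∨ P.f i ∈ D.ηi b a := by
  rw [← P.reverse_f_sub hi] at hE ⊢
  refine P.reverse.mem_ηi_of_pred_notMem (by simp; omega) hE fun h => ?_
  rw [P.reverse_f, show P.n - 1 - (P.n - 1 - i - 1) = i + 1 by omega]
  exact hnext (by omega)

lemma mem_ηi_and_mem_ηi_of_run (hi : i < P.n) (hj : j < P.n) (hiE : P.f i ∈ D.ηe a b)
    (hjE : P.f j ∈ D.ηe a b) (hprev : 0 < i → P.f (i - 1) ∉ D.ηe a b)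
    (hnext : j + 1 < P.n → P.f (j + 1) ∉ D.ηe a b) :
    P.f i ∈ D.ηi a b ∧ P.f j ∈ D.ηi b a ∨ P.f i ∈ D.ηi b a ∧ P.f j ∈ D.ηi a b := by
  have hprev' : 0 < i → P.f (i - 1) ∉ D.ηe b a := by rw [D.ηe_symm]; exact hprev
  have hnext' : j + 1 < P.n → P.f (j + 1) ∉ D.ηe b a := by rw [D.ηe_symm]; exact hnext
  rcases P.mem_ηi_of_pred_notMem hi hiE hprev with hiA | hiB <;>
    rcases P.mem_ηi_of_succ_notMem hj hjE hnext with hjA | hjB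
  · obtain rfl := P.eq_of_mem_ηi hi hj hiA hjA
    by_cases hiB : P.f i ∈ D.ηi b a
    · exact Or.inl ⟨hiA, hiB⟩
    · exact (P.not_isolated_of_mem_ηi hi hiA hiB hprev hnext).elim
  · exact Or.inl ⟨hiA, hjB⟩
  · exact Or.inr ⟨hiB, hjA⟩
  · obtain rfl := P.eq_of_mem_ηi hi hj hiB hjB
    by_cases hiA : P.f i ∈ D.ηi a b
    · exact Or.inr ⟨hiB, hiA⟩
    · exact (P.not_isolated_of_mem_ηi hi hiB hiA hprev' hnext').elim

theorem exists_interval_ηe (hk : k < P.n) (hkE : P.f k ∈ D.ηe a b) :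
    ∃ s t, s ≤ t ∧ t < P.n ∧ (∀ i < P.n, P.f i ∈ D.ηe a b ↔ s ≤ i ∧ i ≤ t) ∧
      (P.f s ∈ D.ηi a b ∧ P.f t ∈ D.ηi b a ∨ P.f s ∈ D.ηi b a ∧ P.f t ∈ D.ηi a b) ∧
      ∀ i, s < i → i < t → P.f i ∉ D.ηi a b ∧ P.f i ∉ D.ηi b a := by
  obtain ⟨s, hsk, hsE, hmin⟩ := exists_first_of (p := fun i => P.f i ∈ D.ηe a b) hkE
  obtain ⟨t, hkt, htn, htE, hmax⟩ := exists_last_of (p := fun i => P.f i ∈ D.ηe a b) hkE hk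
  have hprev : 0 < s → P.f (s - 1) ∉ D.ηe a b := fun _ => hmin _ (by omega)
  have hnext : t + 1 < P.n → P.f (t + 1) ∉ D.ηe a b := hmax _ (by omega)
  have hends := P.mem_ηi_and_mem_ηi_of_run (by omega) htn hsE htE hprev hnext
  have hrun : ∀ i, s ≤ i → i ≤ t → P.f i ∈ D.ηe a b := by
    intro i hsi hit
    by_contra hiE
    obtain ⟨j, -, hji, hjE, hj1⟩ :=
      exists_le_lt_and_not_succ (p := fun k => P.f k ∈ D.ηe a b) hsi hsE hiE
    obtain ⟨j', hij', hj't, hj'E, hj'1⟩ :=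
      exists_le_lt_and_not_succ (p := fun k => P.f k ∉ D.ηe a b) hit hiE (not_not.mpr htE)
    -- the runs ending at `j` and starting at `j' + 1` would both meet `η(ab, a)`
    have h1 := P.mem_ηi_and_mem_ηi_of_run (by omega) (by omega) hsE hjE hprev fun _ => hj1
    have h2 := P.mem_ηi_and_mem_ηi_of_run (by omega) htn (not_not.mp hj'1) htE
      (fun _ => by simpa using hj'E) hnext
    rcases h1 with ⟨h1A, -⟩ | ⟨-, h1A⟩ <;> rcases h2 with ⟨h2A, -⟩ | ⟨-, h2A⟩ <;>
      have := P.eq_of_mem_ηi (by omega) (by omega) h1A h2A <;> omega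
  refine ⟨s, t, by omega, htn, fun i hi => ⟨fun hiE => ⟨?_, ?_⟩, fun h => hrun i h.1 h.2⟩,
    hends, fun i hsi hit => ⟨fun hA => ?_, fun hB => ?_⟩⟩
  · by_contra
    exact hmin i (by omega) hiE
  · by_contra
    exact hmax i (by omega) hi hiE
  · rcases hends with ⟨hsA, -⟩ | ⟨-, htA⟩
    · have := P.eq_of_mem_ηi (by omega) (by omega) hA hsA
      omega
    · have := P.eq_of_mem_ηi (by omega) (by omega) hA htA
      omega
  · rcases hends with ⟨-, htB⟩ | ⟨hsB, -⟩
    · have := P.eq_of_mem_ηi (by omega) (by omega) hB htB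
      omega
    · have := P.eq_of_mem_ηi (by omega) (by omega) hB hsB
      omega


def segment (s t : ℕ) : List V :=
  (List.range (t + 1 - s)).map fun i => P.f (s + i)

lemma segment_ne_nil (hst : s ≤ t) : P.segment s t ≠ [] := by
  simp only [segment, ne_eq, List.map_eq_nil_iff, List.range_eq_nil]
  omega

lemma mem_segment {v : V} : v ∈ P.segment s t ↔ ∃ i, s ≤ i ∧ i ≤ t ∧ P.f i = v := by
  simp only [segment, List.mem_map, List.mem_range]
  constructor
  · rintro ⟨i, hi, rfl⟩
    exact ⟨s + i, by omega, by omega, rfl⟩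
  · rintro ⟨i, hsi, hit, rfl⟩
    exact ⟨i - s, by omega, by rw [Nat.add_sub_cancel' hsi]⟩

lemma segment_head (hst : s ≤ t) : (P.segment s t).head (P.segment_ne_nil hst) = P.f s := by
  simp [segment, List.head_map, List.head_range]

lemma segment_getLast (hst : s ≤ t) :
    (P.segment s t).getLast (P.segment_ne_nil hst) = P.f t := by
  simp only [segment, List.getLast_map, List.getLast_range]
  congr 1
  omega

lemma isInducedPathList_segment (hst : s ≤ t) (ht : t < P.n) :
    IsInducedPathList G (P.segment s t) := by
  refine ⟨P.segment_ne_nil hst, List.nodup_range.map_on fun i hi j hj h => ?_, fun i j hi hj => ?_⟩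
  · simp only [List.mem_range] at hi hj
    have := P.injOn _ _ (by omega) (by omega) h
    omega
  · simp only [segment, List.length_map, List.length_range] at hi hj
    simp only [segment, List.get_eq_getElem, List.getElem_map, List.getElem_range]
    exact (P.adj_iff _ _ (by omega) (by omega)).trans (by omega)

def ofList (l : List V) (hl : IsInducedPathList G l) (hx : D.Peripheral (l.head hl.1))
    (hy : D.Peripheral (l.getLast hl.1)) (hxy : l.head hl.1 ≠ l.getLast hl.1) :
    PeripheralPath D where
  n := l.length
  f i := l.getD i (l.head hl.1)
  injOn i j hi hj h := by
    rw [List.getD_eq_getElem _ _ hi, List.getD_eq_getElem _ _ hj] at h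
    exact hl.2.1.getElem_inj_iff.mp h
  adj_iff i j hi hj := by
    rw [List.getD_eq_getElem _ _ hi, List.getD_eq_getElem _ _ hj]
    exact hl.2.2 i j hi hj
  peripheral_start := by
    rwa [List.getD_eq_getElem _ _ (List.length_pos_iff.mpr hl.1), ← List.head_eq_getElem]
  peripheral_end := by
    rwa [List.getD_eq_getElem _ _ (by simp [List.length_pos_iff.mpr hl.1]),
      ← List.getLast_eq_getElem]
  start_ne_end := by
    rwa [List.getD_eq_getElem _ _ (List.length_pos_iff.mpr hl.1), ← List.head_eq_getElem,
      List.getD_eq_getElem _ _ (by simp [List.length_pos_iff.mpr hl.1]),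
      ← List.getLast_eq_getElem]

lemma mem_iff_exists_ofList_f {l : List V} {hl : IsInducedPathList G l}
    {hx : D.Peripheral (l.head hl.1)} {hy : D.Peripheral (l.getLast hl.1)}
    {hxy : l.head hl.1 ≠ l.getLast hl.1} {v : V} :
    v ∈ l ↔ ∃ i < (ofList l hl hx hy hxy).n, (ofList l hl hx hy hxy).f i = v := by
  rw [List.mem_iff_getElem]
  exact exists_congr fun i => ⟨fun ⟨hi, h⟩ => ⟨hi, (List.getD_eq_getElem _ _ hi).trans h⟩,
    fun ⟨hi, h⟩ => ⟨hi, (List.getD_eq_getElem _ _ hi).symm.trans h⟩⟩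

end PeripheralPath

end

theorem path_inside_edge_structure_general {V : Type*} {H' : Type*}
    (G : SimpleGraph V) (H : SimpleGraph H') (D : ESD G H)
    (l : List V) (hl : IsInducedPathList G l) (hne : l ≠ [])
    (hx : D.Peripheral (l.head hne)) (hy : D.Peripheral (l.getLast hne))
    (hxy : l.head hne ≠ l.getLast hne)
    (a b : H') (hmeet : ∃ u ∈ l, u ∈ D.ηe a b) :
    ∃ (m : List V) (hm : m ≠ []), IsInducedPathList G m ∧
      {v | v ∈ m} = {v | v ∈ l} ∩ D.ηe a b ∧
      ((m.head hm ∈ D.ηi a b ∧ m.getLast hm ∈ D.ηi b a) ∨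
       (m.head hm ∈ D.ηi b a ∧ m.getLast hm ∈ D.ηi a b)) ∧
      (∀ v ∈ m, v ≠ m.head hm → v ≠ m.getLast hm →
        v ∈ D.ηe a b \ (D.ηi a b ∪ D.ηi b a)) := by
  let P := PeripheralPath.ofList l hl hx hy hxy
  have hmem (v : V) : v ∈ l ↔ ∃ i < P.n, P.f i = v := PeripheralPath.mem_iff_exists_ofList_f
  obtain ⟨u, hu, huE⟩ := hmeet
  obtain ⟨k, hk, rfl⟩ := (hmem u).mp hu
  obtain ⟨s, t, hst, ht, hiff, hends, hint⟩ := P.exists_interval_ηe hk huE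
  refine ⟨P.segment s t, P.segment_ne_nil hst, P.isInducedPathList_segment hst ht, ?_,
    by rwa [P.segment_head hst, P.segment_getLast hst], fun v hv hvs hvt => ?_⟩
  · ext v
    simp only [Set.mem_ofPred_eq, Set.mem_inter_iff, P.mem_segment, hmem]
    constructor
    · rintro ⟨i, hsi, hit, rfl⟩
      exact ⟨⟨i, by omega, rfl⟩, (hiff i (by omega)).mpr ⟨hsi, hit⟩⟩
    · rintro ⟨⟨i, hi, rfl⟩, hE⟩
      exact ⟨i, ((hiff i hi).mp hE).1, ((hiff i hi).mp hE).2, rfl⟩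
  · obtain ⟨i, hsi, hit, rfl⟩ := P.mem_segment.mp hv
    rw [P.segment_head hst] at hvs
    rw [P.segment_getLast hst] at hvt
    have hsi' : s < i := lt_of_le_of_ne hsi fun h => hvs (h ▸ rfl)
    have hit' : i < t := lt_of_le_of_ne hit fun h => hvt (h ▸ rfl)
    exact ⟨(hiff i (by omega)).mpr ⟨hsi, hit⟩,
      fun h => h.elim (hint i hsi' hit').1 (hint i hsi' hit').2⟩

/-- the intersection of an induced path between two distinct peripheral
vertices with an edge set `η(e)` induces a path with endpoints in the two interfaces
and internal vertices in the interior of `η(e)`. -/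
theorem path_inside_edge_structure {V : Type*} {H' : Type*}
    (G : SimpleGraph V) (H : SimpleGraph H') (D : ESD G H)
    (l : List V) (hl : IsInducedPathList G l) (hne : l ≠ [])
    (hx : D.Peripheral (l.head hne)) (hy : D.Peripheral (l.getLast hne))
    (hxy : l.head hne ≠ l.getLast hne)
    (a b : H') (hab : H.Adj a b) (hmeet : ∃ u ∈ l, u ∈ D.ηe a b) :
    ∃ (m : List V) (hm : m ≠ []), IsInducedPathList G m ∧
      {v | v ∈ m} = {v | v ∈ l} ∩ D.ηe a b ∧
      ((m.head hm ∈ D.ηi a b ∧ m.getLast hm ∈ D.ηi b a) ∨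
       (m.head hm ∈ D.ηi b a ∧ m.getLast hm ∈ D.ηi a b)) ∧
      (∀ v ∈ m, v ≠ m.head hm → v ≠ m.getLast hm →
        v ∈ D.ηe a b \ (D.ηi a b ∪ D.ηi b a)) :=
  path_inside_edge_structure_general G H D l hl hne hx hy hxy a b hmeet
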